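/- Under the hypotheses of the active-ingredient mass-balance identity with η = 0, the total mass W(t) = V_A Q_A(t) + ∫_0^L N(t,x) dx + V_B Q_B(t) is constant in time; in particular, if the initial data satisfy Q_A(0) = Q_A^0, N(0,x) = 0 for all x ∈ [0,L], and Q_B(0) = 0, then W(t) = V_A Q_A^0 for all t ≥ 0. -/

import Mathlib

/-!
Integrating the diffusion equation over `[0, L]` turns the time derivative of the mass in the
membrane into the difference of the fluxes at its two faces. The boundary conditions identify
these fluxes with the exchange terms of the two compartment equations, so with `η = 0` the three
rates cancel and the total mass has zero derivative.
-/

open Set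

section

variable {E : Type*} [NormedAddCommGroup E] [NormedSpace ℝ E] {a b : ℝ}

theorem hasDerivAt_intervalIntegral_of_continuousOn_deriv {F : ℝ → ℝ → E} (hab : a ≤ b)
    (hF : ∀ s, ContinuousOn (F s) (Icc a b))
    (hF_diff : ∀ x ∈ Icc a b, ∀ s, DifferentiableAt ℝ (F · x) s)
    (hF' : ContinuousOn (fun p : ℝ × ℝ => deriv (F · p.2) p.1) (univ ×ˢ Icc a b)) (t : ℝ) :
    HasDerivAt (fun s => ∫ x in a..b, F s x) (∫ x in a..b, deriv (F · x) t) t := by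
  have hIoc : uIoc a b ⊆ Icc a b := by
    rw [uIoc_of_le hab]
    exact Ioc_subset_Icc_self
  have hslice : ∀ s, ContinuousOn (fun x => deriv (F · x) s) (Icc a b) := fun s =>
    hF'.comp (Continuous.prodMk_right s).continuousOn fun x hx => ⟨mem_univ s, hx⟩
  obtain ⟨C, hC⟩ := (isCompact_closedBall t 1 |>.prod isCompact_Icc).exists_bound_of_continuousOn
    (hF'.mono (prod_mono (subset_univ _) subset_rfl))
  refine (intervalIntegral.hasDerivAt_integral_of_dominated_loc_of_deriv_le (bound := fun _ => C)
    (Metric.closedBall_mem_nhds t one_pos)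
    (.of_forall fun s => ((hF s).mono hIoc).aestronglyMeasurable measurableSet_uIoc)
    ((hF t).intervalIntegrable_of_Icc hab)
    (((hslice t).mono hIoc).aestronglyMeasurable measurableSet_uIoc)
    (.of_forall fun x hx s hs => hC (s, x) ⟨hs, hIoc hx⟩)
    intervalIntegrable_const
    (.of_forall fun x hx s _ => (hF_diff x (hIoc hx) s).hasDerivAt)).2

theorem hasDerivAt_intervalIntegral_of_conservation_law [CompleteSpace E] {N G : ℝ → ℝ → E}
    (hab : a ≤ b)
    (hN : ∀ s, ContinuousOn (N s) (Icc a b))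
    (hN_diff : ∀ x ∈ Icc a b, ∀ s, DifferentiableAt ℝ (N · x) s)
    (hN' : ContinuousOn (fun p : ℝ × ℝ => deriv (N · p.2) p.1) (univ ×ˢ Icc a b)) {t : ℝ}
    (hG : ContDiffOn ℝ 1 (G t) (Icc a b))
    (hpde : ∀ x ∈ Icc a b, deriv (N · x) t = derivWithin (G t) (Icc a b) x) :
    HasDerivAt (fun s => ∫ x in a..b, N s x) (G t b - G t a) t := by
  have hflux : ∫ x in a..b, deriv (N · x) t = G t b - G t a := by
    rw [intervalIntegral.integral_congr fun x hx => hpde x (uIcc_of_le hab ▸ hx)]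
    exact intervalIntegral.integral_derivWithin_Icc_of_contDiffOn_Icc hG hab
  exact hflux ▸ hasDerivAt_intervalIntegral_of_continuousOn_deriv hab hN hN_diff hN' t

end

theorem active_ingredient_mass_conservation_general
    (V_A V_B A L muA muB KA1 KB1 η QA0 : ℝ)
    (hL : 0 < L)
    (hη : η = 0)
    (Q_A Q_B : ℝ → ℝ) (g N : ℝ → ℝ → ℝ)
    (hQA : Differentiable ℝ Q_A) (hQB : Differentiable ℝ Q_B)
    (hNx : ∀ t : ℝ, ContDiffOn ℝ 1 (N t) (Set.Icc 0 L))
    (hflux : ∀ t : ℝ, ContDiffOn ℝ 1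
      (fun x => g t x * derivWithin (N t) (Set.Icc 0 L) x) (Set.Icc 0 L))
    (hNt : ∀ x ∈ Set.Icc (0 : ℝ) L, ∀ t : ℝ,
      DifferentiableAt ℝ (fun s => N s x) t)
    (hNt_cont : ContinuousOn
      (fun p : ℝ × ℝ => deriv (fun s => N s p.2) p.1)
      (Set.univ ×ˢ Set.Icc 0 L))
    (hodeA : ∀ t : ℝ, V_A * deriv Q_A t =
      -(muA * A * (Q_A t - KA1 * N t 0 / A)))
    (hpde : ∀ t : ℝ, ∀ x ∈ Set.Icc (0 : ℝ) L,
      deriv (fun s => N s x) t =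
        derivWithin (fun x' => g t x' * derivWithin (N t) (Set.Icc 0 L) x')
          (Set.Icc 0 L) x)
    (hodeB : ∀ t : ℝ, V_B * deriv Q_B t =
      muB * A * (KB1 * N t L / A - Q_B t) - η * V_B * Q_B t)
    (hbc0 : ∀ t : ℝ, -(g t 0 * derivWithin (N t) (Set.Icc 0 L) 0) =
      muA * A * (Q_A t - KA1 * N t 0 / A))
    (hbcL : ∀ t : ℝ, -(g t L * derivWithin (N t) (Set.Icc 0 L) L) =
      muB * A * (KB1 * N t L / A - Q_B t)) :
    (∀ t₁ t₂ : ℝ,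
      V_A * Q_A t₁ + (∫ x in (0 : ℝ)..L, N t₁ x) + V_B * Q_B t₁ =
      V_A * Q_A t₂ + (∫ x in (0 : ℝ)..L, N t₂ x) + V_B * Q_B t₂) ∧
    ((Q_A 0 = QA0 ∧ (∀ x ∈ Set.Icc (0 : ℝ) L, N 0 x = 0) ∧ Q_B 0 = 0) →
      ∀ t : ℝ, 0 ≤ t →
        V_A * Q_A t + (∫ x in (0 : ℝ)..L, N t x) + V_B * Q_B t =
          V_A * QA0) := by
  subst hη
  set W : ℝ → ℝ := fun t => V_A * Q_A t + (∫ x in (0 : ℝ)..L, N t x) + V_B * Q_B t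
  have hW : ∀ t, HasDerivAt W 0 t := fun t => by
    have hmembrane := hasDerivAt_intervalIntegral_of_conservation_law
      (G := fun t x => g t x * derivWithin (N t) (Icc 0 L) x) hL.le
      (fun s => (hNx s).continuousOn) hNt hNt_cont (hflux t) (hpde t)
    refine ((((hQA t).hasDerivAt.const_mul V_A).add hmembrane).add
      ((hQB t).hasDerivAt.const_mul V_B)).congr_deriv ?_
    linarith [hodeA t, hodeB t, hbc0 t, hbcL t]
  have hconst : ∀ t₁ t₂, W t₁ = W t₂ :=
    is_const_of_deriv_eq_zero (fun t => (hW t).differentiableAt) fun t => (hW t).deriv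
  refine ⟨hconst, ?_⟩
  rintro ⟨hQA_init, hN_init, hQB_init⟩ t -
  have hmembrane_init : ∫ x in (0 : ℝ)..L, N 0 x = 0 := by
    rw [intervalIntegral.integral_congr (g := 0) fun x hx => hN_init x (uIcc_of_le hL.le ▸ hx)]
    exact intervalIntegral.integral_zero
  change W t = _
  rw [hconst t 0]
  simp only [W, hQA_init, hQB_init, hmembrane_init, mul_zero, add_zero]

/-- Conservation of active-ingredient mass when `η = 0`: under the hypotheses
of the active-ingredient mass-balance identity, the total mass
`W(t) = V_A Q_A(t) + ∫₀ᴸ N(t,x) dx + V_B Q_B(t)` is constant in time; in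
particular, if `Q_A(0) = Q_A⁰`, `N(0,·) ≡ 0` on `[0,L]` and `Q_B(0) = 0`,
then `W(t) = V_A Q_A⁰` for all `t ≥ 0`. -/
theorem active_ingredient_mass_conservation
    (V_A V_B A L muA muB KA1 KB1 η QA0 : ℝ)
    (hVA : 0 < V_A) (hVB : 0 < V_B) (hA : 0 < A) (hL : 0 < L)
    (hmuA : 0 < muA) (hmuB : 0 < muB)
    (hKA : 0 < KA1) (hKB : 0 < KB1) (hη : η = 0) (hQA0 : 0 < QA0)
    (Q_A Q_B : ℝ → ℝ) (g N : ℝ → ℝ → ℝ)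
    (hQA : Differentiable ℝ Q_A) (hQB : Differentiable ℝ Q_B)
    (hg_cont : ContinuousOn (fun p : ℝ × ℝ => g p.1 p.2)
      (Set.univ ×ˢ Set.Icc 0 L))
    (hg_pos : ∀ t : ℝ, ∀ x ∈ Set.Icc (0 : ℝ) L, 0 < g t x)
    (hNx : ∀ t : ℝ, ContDiffOn ℝ 1 (N t) (Set.Icc 0 L))
    (hflux : ∀ t : ℝ, ContDiffOn ℝ 1
      (fun x => g t x * derivWithin (N t) (Set.Icc 0 L) x) (Set.Icc 0 L))
    (hNt : ∀ x ∈ Set.Icc (0 : ℝ) L, ∀ t : ℝ,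
      DifferentiableAt ℝ (fun s => N s x) t)
    (hNt_cont : ContinuousOn
      (fun p : ℝ × ℝ => deriv (fun s => N s p.2) p.1)
      (Set.univ ×ˢ Set.Icc 0 L))
    (hodeA : ∀ t : ℝ, V_A * deriv Q_A t =
      -(muA * A * (Q_A t - KA1 * N t 0 / A)))
    (hpde : ∀ t : ℝ, ∀ x ∈ Set.Icc (0 : ℝ) L,
      deriv (fun s => N s x) t =
        derivWithin (fun x' => g t x' * derivWithin (N t) (Set.Icc 0 L) x')
          (Set.Icc 0 L) x)
    (hodeB : ∀ t : ℝ, V_B * deriv Q_B t =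
      muB * A * (KB1 * N t L / A - Q_B t) - η * V_B * Q_B t)
    (hbc0 : ∀ t : ℝ, -(g t 0 * derivWithin (N t) (Set.Icc 0 L) 0) =
      muA * A * (Q_A t - KA1 * N t 0 / A))
    (hbcL : ∀ t : ℝ, -(g t L * derivWithin (N t) (Set.Icc 0 L) L) =
      muB * A * (KB1 * N t L / A - Q_B t)) :
    (∀ t₁ t₂ : ℝ,
      V_A * Q_A t₁ + (∫ x in (0 : ℝ)..L, N t₁ x) + V_B * Q_B t₁ =
      V_A * Q_A t₂ + (∫ x in (0 : ℝ)..L, N t₂ x) + V_B * Q_B t₂) ∧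
    ((Q_A 0 = QA0 ∧ (∀ x ∈ Set.Icc (0 : ℝ) L, N 0 x = 0) ∧ Q_B 0 = 0) →
      ∀ t : ℝ, 0 ≤ t →
        V_A * Q_A t + (∫ x in (0 : ℝ)..L, N t x) + V_B * Q_B t =
          V_A * QA0) :=
  active_ingredient_mass_conservation_general V_A V_B A L muA muB KA1 KB1 η QA0 hL hη Q_A Q_B g N
    hQA hQB hNx hflux hNt hNt_cont hodeA hpde hodeB hbc0 hbcL
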